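/- Let v ∈ [0,1]^Q with v ⪯ m (the value vector), and let s_A be a positional Player A strategy that locally dominates v. Assume that every end component H = (Q_H, β) of the MDP induced by s_A with Q_H ≠ {⊤} satisfies val(q_H) = 0 for every q_H ∈ Q_H. Then s_A guarantees v: for every state q ∈ Q, val(s_A)(q) ≥ v(q). -/

import Mathlib

open scoped BigOperators Classical

noncomputable section

/-- A probability distribution on a finite type. -/
def FDist (X : Type) [Fintype X] : Type :=
  { p : X → ℝ // (∀ x, 0 ≤ p x) ∧ ∑ x, p x = 1 }

namespace CRG

variable {A B Q D : Type} [Fintype A] [Fintype B] [Fintype Q] [Fintype D]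

/-- The support of a distribution. -/
def supp {X : Type} [Fintype X] (σ : FDist X) : Set X := { x | σ.1 x ≠ 0 }

/-- The Dirac distribution. -/
def dirac {X : Type} [Fintype X] [DecidableEq X] (x : X) : FDist X :=
  ⟨fun y => if y = x then 1 else 0, by
    constructor
    · intro y
      dsimp only
      split <;> norm_num
    · simp⟩

/-- Outcome of a pair of mixed strategies in the game in normal form with payoff `u`. -/
def out (u : A → B → ℝ) (σA : FDist A) (σB : FDist B) : ℝ :=
  ∑ a, ∑ b, σA.1 a * σB.1 b * u a b

/-- Outcome of a mixed strategy of Player A against a pure action of Player B. -/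
def outB (u : A → B → ℝ) (σA : FDist A) (b : B) : ℝ :=
  ∑ a, σA.1 a * u a b

/-- The value of a Player A mixed strategy in a game in normal form. -/
def valStratGF (u : A → B → ℝ) (σA : FDist A) : ℝ :=
  ⨅ σB : FDist B, out u σA σB

/-- The (von Neumann) value of a finite game in normal form. -/
def valGF (u : A → B → ℝ) : ℝ :=
  ⨆ σA : FDist A, valStratGF u σA

/-- The optimal Player A mixed strategies in a game in normal form. -/
def OptA (u : A → B → ℝ) : Set (FDist A) := { σA | valStratGF u σA = valGF u }

/-- The optimal actions of Player B against the Player A mixed strategy `σA`. -/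
def optActs (u : A → B → ℝ) (σA : FDist A) : Set B :=
  { b | outB u σA b = valStratGF u σA }

/-- μ_v : the lift of a valuation of the states to the Nature states. -/
def lift (dist : D → FDist Q) (v : Q → ℝ) (d : D) : ℝ := ∑ q, (dist d).1 q * v q

/-- The payoff function of the local interaction `F_q` valued by `μ_m`. -/
def locPay (δ : Q → A → B → D) (dist : D → FDist Q) (m : Q → ℝ) (q : Q) : A → B → ℝ :=
  fun a b => lift dist m (δ q a b)

/-- One-step transition probability between states. -/
def step (δ : Q → A → B → D) (dist : D → FDist Q) (σA : FDist A) (σB : FDist B)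
    (q q' : Q) : ℝ :=
  ∑ a, ∑ b, σA.1 a * σB.1 b * (dist (δ q a b)).1 q'

/-- The operator Δ on valuations of the states. -/
def Δop (δ : Q → A → B → D) (dist : D → FDist Q) (T : Q) (v : Q → ℝ) : Q → ℝ :=
  fun q => if q = T then 1 else valGF (fun a b => lift dist v (δ q a b))

/-- The target `T` is an absorbing (self-looping) sink. -/
def Absorbing (δ : Q → A → B → D) (dist : D → FDist Q) (T : Q) : Prop :=
  ∀ a b, (dist (δ T a b)).1 = fun q => if q = T then 1 else 0

/-- `m` is the least fixed point of Δ on `[0,1]^Q`. -/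
def IsLfpDelta (δ : Q → A → B → D) (dist : D → FDist Q) (T : Q) (m : Q → ℝ) : Prop :=
  (∀ q, m q ∈ Set.Icc (0:ℝ) 1) ∧ Δop δ dist T m = m ∧
    ∀ v : Q → ℝ, (∀ q, v q ∈ Set.Icc (0:ℝ) 1) → Δop δ dist T v = v → ∀ q, m q ≤ v q

/-- A strategy: a history of past states together with the current state gives a
mixed action.  (This encodes maps `Q⁺ → 𝒟(X)`.) -/
def Strat (Q X : Type) [Fintype X] : Type := List Q → Q → FDist X

/-- Residual strategy after the history `π` has been played. -/
def residual {X : Type} [Fintype X] (s : Strat Q X) (π : List Q) : Strat Q X :=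
  fun h q => s (π ++ h) q

/-- The (positional) strategy associated with a per-state choice of mixed actions. -/
def ofPos {X : Type} [Fintype X] (s : Q → FDist X) : Strat Q X := fun _ q => s q

/-- Probability of reaching the set `S` within `n` steps from current state `q`,
history `h` having been played. -/
def reachSetNAux (δ : Q → A → B → D) (dist : D → FDist Q) (S : Set Q) :
    ℕ → Strat Q A → Strat Q B → List Q → Q → ℝ
  | 0, _, _, _, q => if q ∈ S then 1 else 0
  | n + 1, sA, sB, h, q =>
      if q ∈ S then 1
      else ∑ q', step δ dist (sA h q) (sB h q) q q' *
        reachSetNAux δ dist S n sA sB (h ++ [q]) q'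

/-- Probability of reaching the set `S` within `n` steps from state `q`. -/
def reachSetN (δ : Q → A → B → D) (dist : D → FDist Q) (S : Set Q) (n : ℕ)
    (sA : Strat Q A) (sB : Strat Q B) (q : Q) : ℝ :=
  reachSetNAux δ dist S n sA sB [] q

/-- Probability of reaching the target `T` within `n` steps from state `q`. -/
def reachN (δ : Q → A → B → D) (dist : D → FDist Q) (T : Q) (n : ℕ)
    (sA : Strat Q A) (sB : Strat Q B) (q : Q) : ℝ :=
  reachSetN δ dist {T} n sA sB q

/-- Probability of eventually reaching the target `T` from state `q`. -/
def reach (δ : Q → A → B → D) (dist : D → FDist Q) (T : Q)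
    (sA : Strat Q A) (sB : Strat Q B) (q : Q) : ℝ :=
  ⨆ n : ℕ, reachN δ dist T n sA sB q

/-- The value of a Player A strategy from state `q`. -/
def valA (δ : Q → A → B → D) (dist : D → FDist Q) (T : Q) (sA : Strat Q A) (q : Q) : ℝ :=
  ⨅ sB : Strat Q B, reach δ dist T sA sB q

/-- The value of the game from state `q`. -/
def value (δ : Q → A → B → D) (dist : D → FDist Q) (T : Q) (q : Q) : ℝ :=
  ⨆ sA : Strat Q A, valA δ dist T sA q

/-- A state is maximizable when Player A has an optimal strategy from it. -/
def Maximizable (δ : Q → A → B → D) (dist : D → FDist Q) (T q : Q) : Prop :=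
  ∃ sA : Strat Q A, valA δ dist T sA q = value δ dist T q

/-- A positional Player A strategy locally dominates the valuation `v`. -/
def LocallyDominates (δ : Q → A → B → D) (dist : D → FDist Q)
    (sA : Q → FDist A) (v : Q → ℝ) : Prop :=
  ∀ q, v q ≤ valStratGF (fun a b => lift dist v (δ q a b)) (sA q)

/-- Transition function ι of the MDP induced by a positional Player A strategy. -/
def stepB [DecidableEq B] (δ : Q → A → B → D) (dist : D → FDist Q)
    (sA : Q → FDist A) (q : Q) (b : B) (q' : Q) : ℝ :=
  step δ dist (sA q) (dirac b) q q'

/-- An end component of the MDP induced by the positional Player A strategy `sA`. -/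
structure EndComp [DecidableEq B] (δ : Q → A → B → D) (dist : D → FDist Q)
    (sA : Q → FDist A) where
  states : Set Q
  acts : Q → Set B
  acts_nonempty : ∀ q ∈ states, (acts q).Nonempty
  closed : ∀ q ∈ states, ∀ b ∈ acts q, ∀ q', stepB δ dist sA q b q' ≠ 0 → q' ∈ states
  connected : ∀ q ∈ states, ∀ q' ∈ states,
    Relation.ReflTransGen
      (fun x y => x ∈ states ∧ ∃ b ∈ acts x, stepB δ dist sA x b y ≠ 0) q q'

/-- `S_D` : the Nature states having a non-zero probability to reach `S`. -/
def natS (dist : D → FDist Q) (S : Set Q) : Set D :=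
  { d | ∃ q ∈ S, (dist d).1 q ≠ 0 }

/-- Progressive optimal local strategies at `q` w.r.t. the set `Gd`. -/
def Prog (δ : Q → A → B → D) (dist : D → FDist Q) (m : Q → ℝ) (q : Q)
    (Gd : Set Q) : Set (FDist A) :=
  { σA | σA ∈ OptA (locPay δ dist m q) ∧
      ∀ b ∈ optActs (locPay δ dist m q) σA, ∃ a ∈ supp σA, δ q a b ∈ natS dist Gd }

/-- Risky optimal local strategies at `q` w.r.t. the set `Bd`. -/
def Risk (δ : Q → A → B → D) (dist : D → FDist Q) (m : Q → ℝ) (q : Q)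
    (Bd : Set Q) : Set (FDist A) :=
  { σA | σA ∈ OptA (locPay δ dist m q) ∧
      ∃ b ∈ optActs (locPay δ dist m q) σA, ∃ a ∈ supp σA, δ q a b ∈ natS dist Bd }

/-- Efficient local strategies: progressive and not risky. -/
def Eff (δ : Q → A → B → D) (dist : D → FDist Q) (m : Q → ℝ) (q : Q)
    (Gd Bd : Set Q) : Set (FDist A) :=
  Prog δ dist m q Gd \ Risk δ dist m q Bd

/-- The increasing sequence of sets of secure states w.r.t. `Bd`. -/
def SecN (δ : Q → A → B → D) (dist : D → FDist Q) (m : Q → ℝ) (T : Q) (Bd : Set Q) :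
    ℕ → Set Q
  | 0 => {T}
  | n + 1 => SecN δ dist m T Bd n ∪
      { q | q ∉ Bd ∧ (Eff δ dist m q (SecN δ dist m T Bd n) Bd).Nonempty }

/-- The set of secure states w.r.t. `Bd`. -/
def Sec (δ : Q → A → B → D) (dist : D → FDist Q) (m : Q → ℝ) (T : Q) (Bd : Set Q) :
    Set Q :=
  (⋃ n : ℕ, SecN δ dist m T Bd n) ∪ { q | m q = 0 }

/-- The sequence of sets of bad states. -/
def BadN (δ : Q → A → B → D) (dist : D → FDist Q) (m : Q → ℝ) (T : Q) : ℕ → Set Q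
  | 0 => ∅
  | n + 1 => (Sec δ dist m T (BadN δ dist m T n))ᶜ

/-- The set of bad states. -/
def Bad (δ : Q → A → B → D) (dist : D → FDist Q) (m : Q → ℝ) (T : Q) : Set Q :=
  BadN δ dist m T (Fintype.card Q)

/-- `α[y]` : the total valuation extending the partial valuation `α : O∖E → [0,1]`
with the value `y` on `E`. -/
def extendVal {O : Type} (E : Set O) (α : O → ℝ) (y : ℝ) : O → ℝ :=
  fun o => if o ∈ E then y else α o

/-- The map `f_α : y ↦ val_{⟨F, α[y]⟩}`. -/
def fval {O : Type} (ρ : A → B → O) (E : Set O) (α : O → ℝ) (y : ℝ) : ℝ :=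
  valGF (fun a b => extendVal E α y (ρ a b))

/-- `v` is the least fixed point of `f_α` on `[0,1]`. -/
def IsLfpVal {O : Type} (ρ : A → B → O) (E : Set O) (α : O → ℝ) (v : ℝ) : Prop :=
  v ∈ Set.Icc (0:ℝ) 1 ∧ fval ρ E α v = v ∧
    ∀ y ∈ Set.Icc (0:ℝ) 1, fval ρ E α y = y → v ≤ y

/-- The game form `ρ` is reach-maximizable w.r.t. the partial valuation `α : O∖E → [0,1]`. -/
def RMwrt {O : Type} (ρ : A → B → O) (E : Set O) (α : O → ℝ) : Prop :=
  ∀ v : ℝ, IsLfpVal ρ E α v →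
    v = 0 ∨
      ∃ σA ∈ OptA (fun a b => extendVal E α v (ρ a b)),
        ∀ b ∈ optActs (fun a b => extendVal E α v (ρ a b)) σA,
          ∃ a ∈ supp σA, ρ a b ∉ E

/-- A reach-maximizable game form: RM w.r.t. every partial valuation of its outcomes. -/
def RMform {O : Type} (ρ : A → B → O) : Prop :=
  ∀ (E : Set O) (α : O → ℝ), (∀ o ∉ E, α o ∈ Set.Icc (0:ℝ) 1) → RMwrt ρ E α

/-- A determined game form. -/
def Determined {O : Type} (ρ : A → B → O) : Prop :=
  ∀ E : Set O, (∃ a, ∀ b, ρ a b ∈ E) ∨ (∃ b, ∀ a, ρ a b ∉ E)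

/-- Transition function of the three-state reachability game `C_{(F,α)}`:
state `0` is `q₀`, state `1` is the target `⊤`, state `2` is the bin `⊥`. -/
def triδ {O : Type} (ρ : A → B → O) (E : Set O) :
    Fin 3 → A → B → (Fin 3 ⊕ {o : O // o ∉ E}) :=
  fun s a b =>
    if s = 0 then
      if h : ρ a b ∈ E then Sum.inl 0 else Sum.inr ⟨ρ a b, h⟩
    else Sum.inl s

/-- Nature distributions of the three-state reachability game `C_{(F,α)}`. -/
def triDist {O : Type} (E : Set O) (α : O → ℝ)
    (hα : ∀ o ∉ E, α o ∈ Set.Icc (0:ℝ) 1) :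
    (Fin 3 ⊕ {o : O // o ∉ E}) → FDist (Fin 3) := fun d =>
  match d with
  | Sum.inl t => dirac t
  | Sum.inr x =>
      ⟨![0, α x.1, 1 - α x.1], by
        obtain ⟨h0, h1⟩ := hα x.1 x.2
        constructor
        · intro s
          fin_cases s <;> simp <;> linarith
        · simp [Fin.sum_univ_three]⟩

/-- An abstract (finite) game form with actions `A` and `B`. -/
structure GameForm (A B : Type) where
  O : Type
  fin : Fintype O
  ρ : A → B → O

/-- All local interactions of the arena `δ` belong to the set `𝒢` of game forms
(up to a renaming of the outcomes into Nature states). -/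
def UsesForms {Q D : Type} (𝒢 : Set (GameForm A B)) (δ : Q → A → B → D) : Prop :=
  ∀ q, ∃ F ∈ 𝒢, ∃ g : F.O → D, δ q = fun a b => g (F.ρ a b)

/-- The sequence of iterates of Δ starting from the valuation `1_{⊤}`. -/
def vseq (δ : Q → A → B → D) (dist : D → FDist Q) (T : Q) : ℕ → Q → ℝ
  | 0 => fun q => if q = T then 1 else 0
  | n + 1 => Δop δ dist T (vseq δ dist T n)

/-- Relevant paths w.r.t. the strategy `sA` from the state `q₀`: the pair `(h, q)`
encodes the path `h · q` (history `h`, current state `q`). -/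
inductive Relevant [DecidableEq B] (δ : Q → A → B → D) (dist : D → FDist Q)
    (m : Q → ℝ) (sA : Strat Q A) (q₀ : Q) : List Q → Q → Prop
  | base : Relevant δ dist m sA q₀ [] q₀
  | step {h : List Q} {q q' : Q} :
      Relevant δ dist m sA q₀ h q →
      (∃ b ∈ optActs (locPay δ dist m q) (sA h q),
        0 < CRG.step δ dist (sA h q) (dirac b) q q') →
      Relevant δ dist m sA q₀ (h ++ [q]) q'

end CRG

/-! Under `sA`, Player B can keep the expected value of `u = val(sA)` from increasing, whereas
local domination keeps the expected value of `v` from decreasing. Hence on the set `M` where the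
defect `v - u` is maximal, such a choice of Player B actions never leaves `M`, and a bottom
strongly connected part of `M` is an end component. If the maximal defect were positive, `T`
would lie outside `M`, so this end component would consist of states of value `0`, where both
`u` and `v ≤ m ≤ val` vanish. The inequality `m ≤ val` is Knaster–Tarski applied to `Δ`, once
`Δ(val) ≤ val` is established by gluing near-optimal strategies behind a local mixed action. -/

namespace CRG

variable {A B Q D : Type} [Fintype A] [Fintype B] [Fintype Q]

lemma sum_mul_mem_Icc {X : Type} [Fintype X] {p f : X → ℝ} (hp : ∀ x, 0 ≤ p x)
    (hp1 : ∑ x, p x = 1) (hf : ∀ x, f x ∈ Set.Icc (0:ℝ) 1) :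
    ∑ x, p x * f x ∈ Set.Icc (0:ℝ) 1 := by
  refine ⟨Finset.sum_nonneg fun x _ => mul_nonneg (hp x) (hf x).1, ?_⟩
  calc ∑ x, p x * f x ≤ ∑ x, p x :=
        Finset.sum_le_sum fun x _ => mul_le_of_le_one_right (hp x) (hf x).2
    _ = 1 := hp1

lemma eq_of_le_sum_mul_of_forall_le {X : Type} [Fintype X] {p f : X → ℝ} {c : ℝ}
    (hp : ∀ x, 0 ≤ p x) (hp1 : ∑ x, p x = 1) (hf : ∀ x, f x ≤ c)
    (hc : c ≤ ∑ x, p x * f x) {y : X} (hy : p y ≠ 0) : f y = c := by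
  have hterm : ∀ x ∈ Finset.univ, 0 ≤ p x * (c - f x) :=
    fun x _ => mul_nonneg (hp x) (sub_nonneg.2 (hf x))
  have hsum : ∑ x, p x * (c - f x) = 0 := by
    refine le_antisymm ?_ (Finset.sum_nonneg hterm)
    simp only [mul_sub, Finset.sum_sub_distrib, ← Finset.sum_mul, hp1, one_mul]
    linarith
  have := (Finset.sum_eq_zero_iff_of_nonneg hterm).1 hsum y (Finset.mem_univ y)
  rcases mul_eq_zero.1 this with h | h
  · exact absurd h hy
  · linarith

instance FDist.instNonempty {X : Type} [Fintype X] [Nonempty X] : Nonempty (FDist X) :=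
  ⟨dirac (Classical.arbitrary X)⟩

instance Strat.instNonempty {X : Type} [Fintype X] [Nonempty X] : Nonempty (Strat Q X) :=
  ⟨fun _ _ => Classical.arbitrary _⟩

lemma sum_dirac_mul {X : Type} [Fintype X] [DecidableEq X] (x : X) (f : X → ℝ) :
    ∑ y, (dirac x).1 y * f y = f x := by
  simp [dirac]

section GameForm

variable {u u' : A → B → ℝ}

lemma out_eq_sum_mul_sum (u : A → B → ℝ) (σA : FDist A) (σB : FDist B) :
    out u σA σB = ∑ a, σA.1 a * ∑ b, σB.1 b * u a b := by
  simp only [out, Finset.mul_sum, mul_assoc]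

lemma out_eq_sum_mul_out_dirac [DecidableEq B] (u : A → B → ℝ) (σA : FDist A) (σB : FDist B) :
    out u σA σB = ∑ b, σB.1 b * out u σA (dirac b) := by
  simp only [out_eq_sum_mul_sum, sum_dirac_mul, Finset.mul_sum]
  rw [Finset.sum_comm]
  exact Finset.sum_congr rfl fun a _ => Finset.sum_congr rfl fun b _ => mul_left_comm _ _ _

lemma exists_out_dirac_le [DecidableEq B] [Nonempty B] (u : A → B → ℝ) (σA : FDist A) :
    ∃ b, ∀ σB : FDist B, out u σA (dirac b) ≤ out u σA σB := by
  obtain ⟨b, -, hb⟩ := Finset.exists_min_image Finset.univ (fun b => out u σA (dirac b))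
    Finset.univ_nonempty
  refine ⟨b, fun σB => ?_⟩
  rw [out_eq_sum_mul_out_dirac u σA σB]
  calc out u σA (dirac b) = ∑ b', σB.1 b' * out u σA (dirac b) := by
        rw [← Finset.sum_mul, σB.2.2, one_mul]
    _ ≤ ∑ b', σB.1 b' * out u σA (dirac b') :=
        Finset.sum_le_sum fun b' _ =>
          mul_le_mul_of_nonneg_left (hb b' (Finset.mem_univ b')) (σB.2.1 b')

lemma out_mem_Icc (hu : ∀ a b, u a b ∈ Set.Icc (0:ℝ) 1) (σA : FDist A) (σB : FDist B) :
    out u σA σB ∈ Set.Icc (0:ℝ) 1 := by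
  rw [out_eq_sum_mul_sum]
  exact sum_mul_mem_Icc σA.2.1 σA.2.2 fun a => sum_mul_mem_Icc σB.2.1 σB.2.2 (hu a)

lemma out_mono (h : ∀ a b, u a b ≤ u' a b) (σA : FDist A) (σB : FDist B) :
    out u σA σB ≤ out u' σA σB :=
  Finset.sum_le_sum fun a _ => Finset.sum_le_sum fun b _ =>
    mul_le_mul_of_nonneg_left (h a b) (mul_nonneg (σA.2.1 a) (σB.2.1 b))

lemma valStratGF_le_out (hu : ∀ a b, u a b ∈ Set.Icc (0:ℝ) 1) (σA : FDist A)
    (σB : FDist B) : valStratGF u σA ≤ out u σA σB :=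
  ciInf_le ⟨0, by rintro _ ⟨σB', rfl⟩; exact (out_mem_Icc hu σA σB').1⟩ σB

variable [Nonempty B]

lemma valStratGF_mem_Icc (hu : ∀ a b, u a b ∈ Set.Icc (0:ℝ) 1) (σA : FDist A) :
    valStratGF u σA ∈ Set.Icc (0:ℝ) 1 :=
  ⟨le_ciInf fun σB => (out_mem_Icc hu σA σB).1,
    (valStratGF_le_out hu σA (Classical.arbitrary _)).trans (out_mem_Icc hu σA _).2⟩

lemma valStratGF_mono (hu : ∀ a b, u a b ∈ Set.Icc (0:ℝ) 1) (h : ∀ a b, u a b ≤ u' a b)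
    (σA : FDist A) : valStratGF u σA ≤ valStratGF u' σA :=
  le_ciInf fun σB => (valStratGF_le_out hu σA σB).trans (out_mono h σA σB)

variable [Nonempty A]

lemma valGF_mem_Icc (hu : ∀ a b, u a b ∈ Set.Icc (0:ℝ) 1) :
    valGF u ∈ Set.Icc (0:ℝ) 1 :=
  ⟨(valStratGF_mem_Icc hu (Classical.arbitrary _)).1.trans
      (le_ciSup ⟨1, by rintro _ ⟨σA, rfl⟩; exact (valStratGF_mem_Icc hu σA).2⟩ _),
    ciSup_le fun σA => (valStratGF_mem_Icc hu σA).2⟩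

lemma valGF_mono (hu : ∀ a b, u a b ∈ Set.Icc (0:ℝ) 1)
    (hu' : ∀ a b, u' a b ∈ Set.Icc (0:ℝ) 1) (h : ∀ a b, u a b ≤ u' a b) :
    valGF u ≤ valGF u' :=
  ciSup_le fun σA => (valStratGF_mono hu h σA).trans
    (le_ciSup ⟨1, by rintro _ ⟨σA', rfl⟩; exact (valStratGF_mem_Icc hu' σA').2⟩ σA)

end GameForm

lemma lift_mem_Icc (dist : D → FDist Q) {v : Q → ℝ} (hv : ∀ q, v q ∈ Set.Icc (0:ℝ) 1)
    (d : D) : lift dist v d ∈ Set.Icc (0:ℝ) 1 :=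
  sum_mul_mem_Icc (dist d).2.1 (dist d).2.2 hv

lemma lift_mono (dist : D → FDist Q) {v v' : Q → ℝ} (h : ∀ q, v q ≤ v' q) (d : D) :
    lift dist v d ≤ lift dist v' d :=
  Finset.sum_le_sum fun q _ => mul_le_mul_of_nonneg_left (h q) ((dist d).2.1 q)

lemma step_nonneg (δ : Q → A → B → D) (dist : D → FDist Q) (σA : FDist A)
    (σB : FDist B) (q q' : Q) : 0 ≤ step δ dist σA σB q q' :=
  Finset.sum_nonneg fun a _ => Finset.sum_nonneg fun b _ =>
    mul_nonneg (mul_nonneg (σA.2.1 a) (σB.2.1 b)) ((dist (δ q a b)).2.1 q')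

lemma sum_step_mul (δ : Q → A → B → D) (dist : D → FDist Q) (σA : FDist A)
    (σB : FDist B) (q : Q) (w : Q → ℝ) :
    ∑ q', step δ dist σA σB q q' * w q' = out (fun a b => lift dist w (δ q a b)) σA σB := by
  simp only [step, out, lift, Finset.sum_mul, Finset.mul_sum]
  rw [Finset.sum_comm]
  refine Finset.sum_congr rfl fun a _ => ?_
  rw [Finset.sum_comm]
  exact Finset.sum_congr rfl fun b _ => Finset.sum_congr rfl fun q' _ => by ring

lemma step_sum_one (δ : Q → A → B → D) (dist : D → FDist Q) (σA : FDist A)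
    (σB : FDist B) (q : Q) : ∑ q', step δ dist σA σB q q' = 1 := by
  have h := sum_step_mul δ dist σA σB q fun _ => 1
  have hlift : ∀ d, lift dist (fun _ => (1:ℝ)) d = 1 := fun d => by simp [lift, (dist d).2.2]
  simp only [mul_one, hlift] at h
  rw [h, out_eq_sum_mul_sum]
  simp [σA.2.2, σB.2.2]

section Reach

variable (δ : Q → A → B → D) (dist : D → FDist Q)

lemma reachSetNAux_mem_Icc (S : Set Q) (n : ℕ) (sA : Strat Q A) (sB : Strat Q B)
    (h : List Q) (q : Q) : reachSetNAux δ dist S n sA sB h q ∈ Set.Icc (0:ℝ) 1 := by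
  induction n generalizing h q with
  | zero => by_cases hq : q ∈ S <;> simp [reachSetNAux, hq]
  | succ n ih =>
    by_cases hq : q ∈ S
    · simp [reachSetNAux, hq]
    · simp only [reachSetNAux, hq, if_false]
      exact sum_mul_mem_Icc (step_nonneg δ dist _ _ q) (step_sum_one δ dist _ _ q) (ih _)

lemma reachSetNAux_le_succ (S : Set Q) (n : ℕ) (sA : Strat Q A) (sB : Strat Q B)
    (h : List Q) (q : Q) :
    reachSetNAux δ dist S n sA sB h q ≤ reachSetNAux δ dist S (n + 1) sA sB h q := by
  induction n generalizing h q with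
  | zero =>
    by_cases hq : q ∈ S
    · simp [reachSetNAux, hq]
    · simp only [reachSetNAux, hq, if_false]
      exact Finset.sum_nonneg fun q' _ => mul_nonneg (step_nonneg δ dist _ _ q q')
        (reachSetNAux_mem_Icc δ dist S 0 sA sB (h ++ [q]) q').1
  | succ n ih =>
    by_cases hq : q ∈ S
    · simp [reachSetNAux, hq]
    · simp only [reachSetNAux, hq, if_false]
      exact Finset.sum_le_sum fun q' _ =>
        mul_le_mul_of_nonneg_left (ih _ q') (step_nonneg δ dist _ _ q q')

lemma reachSetNAux_append (S : Set Q) (n : ℕ) (sA : Strat Q A) (sB : Strat Q B)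
    (h₀ h : List Q) (q : Q) :
    reachSetNAux δ dist S n sA sB (h₀ ++ h) q
      = reachSetNAux δ dist S n (residual sA h₀) (residual sB h₀) h q := by
  induction n generalizing h q with
  | zero => rfl
  | succ n ih =>
    simp only [reachSetNAux, List.append_assoc, ih]
    rfl

/-- From `q` after history `h`, only the histories `h ++ t` of plays through `q` matter;
`t.headD r = q` says that the play `t ++ [r]` starts at `q`. -/
lemma reachSetNAux_congr_left (S : Set Q) (n : ℕ) {sA sA' : Strat Q A} (sB : Strat Q B)
    (h : List Q) (q : Q) (hA : ∀ t r, t.headD r = q → sA (h ++ t) r = sA' (h ++ t) r) :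
    reachSetNAux δ dist S n sA sB h q = reachSetNAux δ dist S n sA' sB h q := by
  induction n generalizing h q with
  | zero => rfl
  | succ n ih =>
    simp only [reachSetNAux]
    rw [show sA h q = sA' h q by simpa using hA [] q rfl]
    congr 1
    refine Finset.sum_congr rfl fun q' _ => congrArg _ (ih _ q' fun t r ht => ?_)
    simpa using hA (q :: t) r rfl

variable (T : Q)

lemma reachN_mem_Icc (n : ℕ) (sA : Strat Q A) (sB : Strat Q B) (q : Q) :
    reachN δ dist T n sA sB q ∈ Set.Icc (0:ℝ) 1 :=
  reachSetNAux_mem_Icc δ dist {T} n sA sB [] q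

lemma bddAbove_range_reachN (sA : Strat Q A) (sB : Strat Q B) (q : Q) :
    BddAbove (Set.range fun n => reachN δ dist T n sA sB q) :=
  ⟨1, by rintro _ ⟨n, rfl⟩; exact (reachN_mem_Icc δ dist T n sA sB q).2⟩

lemma tendsto_reachN (sA : Strat Q A) (sB : Strat Q B) (q : Q) :
    Filter.Tendsto (fun n => reachN δ dist T n sA sB q) Filter.atTop
      (nhds (reach δ dist T sA sB q)) :=
  tendsto_atTop_ciSup
    (monotone_nat_of_le_succ fun n => reachSetNAux_le_succ δ dist {T} n sA sB [] q)
    (bddAbove_range_reachN δ dist T sA sB q)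

lemma reach_mem_Icc (sA : Strat Q A) (sB : Strat Q B) (q : Q) :
    reach δ dist T sA sB q ∈ Set.Icc (0:ℝ) 1 :=
  ⟨(reachN_mem_Icc δ dist T 0 sA sB q).1.trans
      (le_ciSup (bddAbove_range_reachN δ dist T sA sB q) 0),
    ciSup_le fun n => (reachN_mem_Icc δ dist T n sA sB q).2⟩

lemma reach_target (sA : Strat Q A) (sB : Strat Q B) : reach δ dist T sA sB T = 1 := by
  refine le_antisymm (reach_mem_Icc δ dist T sA sB T).2 ?_
  calc (1:ℝ) = reachN δ dist T 0 sA sB T := by simp [reachN, reachSetN, reachSetNAux]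
    _ ≤ reach δ dist T sA sB T := le_ciSup (bddAbove_range_reachN δ dist T sA sB T) 0

lemma reach_eq_sum_step (sA : Strat Q A) (sB : Strat Q B) {q : Q} (hq : q ≠ T) :
    reach δ dist T sA sB q
      = ∑ q', step δ dist (sA [] q) (sB [] q) q q' *
          reach δ dist T (residual sA [q]) (residual sB [q]) q' := by
  have hsucc : ∀ n, reachN δ dist T (n + 1) sA sB q
      = ∑ q', step δ dist (sA [] q) (sB [] q) q q' *
          reachN δ dist T n (residual sA [q]) (residual sB [q]) q' := fun n => by
    simp only [reachN, reachSetN, reachSetNAux, Set.mem_singleton_iff, hq, if_false,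
      List.nil_append]
    simp only [← reachSetNAux_append, List.append_nil]
  refine tendsto_nhds_unique ((tendsto_reachN δ dist T sA sB q).comp
    (Filter.tendsto_add_atTop_nat 1)) ?_
  simp only [Function.comp_def, hsucc]
  exact tendsto_finsetSum _ fun q' _ => (tendsto_reachN δ dist T _ _ q').const_mul _

lemma reach_congr_left {sA sA' : Strat Q A} (sB : Strat Q B) (q : Q)
    (hA : ∀ t r, t.headD r = q → sA t r = sA' t r) :
    reach δ dist T sA sB q = reach δ dist T sA' sB q := by
  simp only [reach, reachN, reachSetN,
    reachSetNAux_congr_left δ dist {T} _ sB [] q (by simpa using hA)]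

end Reach

/-- Play `σ` at the first step, then follow `s q'` from the state `q'` reached. -/
def Strat.cons {X : Type} [Fintype X] (σ : FDist X) (s : Q → Strat Q X) : Strat Q X
  | [], _ => σ
  | _ :: t, r => s (t.headD r) t r

lemma reach_cons (δ : Q → A → B → D) (dist : D → FDist Q) (T : Q) (σ : FDist A)
    (s : Q → Strat Q A) (sB : Strat Q B) {q : Q} (hq : q ≠ T) :
    reach δ dist T (Strat.cons σ s) sB q
      = ∑ q', step δ dist σ (sB [] q) q q' * reach δ dist T (s q') (residual sB [q]) q' := by
  rw [reach_eq_sum_step δ dist T _ sB hq]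
  refine Finset.sum_congr rfl fun q' _ => congrArg _ ?_
  exact reach_congr_left δ dist T _ q' fun t r ht => by
    simp only [residual, List.singleton_append, Strat.cons, ht]

section Value

variable (δ : Q → A → B → D) (dist : D → FDist Q) (T : Q)

lemma valA_le_reach (sA : Strat Q A) (sB : Strat Q B) (q : Q) :
    valA δ dist T sA q ≤ reach δ dist T sA sB q :=
  ciInf_le ⟨0, by rintro _ ⟨sB', rfl⟩; exact (reach_mem_Icc δ dist T sA sB' q).1⟩ sB

variable [Nonempty B]

lemma valA_mem_Icc (sA : Strat Q A) (q : Q) : valA δ dist T sA q ∈ Set.Icc (0:ℝ) 1 :=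
  ⟨le_ciInf fun sB => (reach_mem_Icc δ dist T sA sB q).1,
    (valA_le_reach δ dist T sA (Classical.arbitrary _) q).trans (reach_mem_Icc δ dist T _ _ q).2⟩

lemma valA_target (sA : Strat Q A) : valA δ dist T sA T = 1 :=
  le_antisymm (valA_mem_Icc δ dist T sA T).2
    (le_ciInf fun sB => (reach_target δ dist T sA sB).ge)

lemma valA_le_value (sA : Strat Q A) (q : Q) : valA δ dist T sA q ≤ value δ dist T q :=
  le_ciSup (f := fun sA => valA δ dist T sA q)
    ⟨1, by rintro _ ⟨sA', rfl⟩; exact (valA_mem_Icc δ dist T sA' q).2⟩ sA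

variable [Nonempty A]

lemma value_mem_Icc (q : Q) : value δ dist T q ∈ Set.Icc (0:ℝ) 1 :=
  ⟨(valA_mem_Icc δ dist T (Classical.arbitrary _) q).1.trans (valA_le_value δ dist T _ q),
    ciSup_le fun sA => (valA_mem_Icc δ dist T sA q).2⟩

lemma value_target : value δ dist T T = 1 :=
  le_antisymm (value_mem_Icc δ dist T T).2
    ((valA_target δ dist T (Classical.arbitrary _)).ge.trans (valA_le_value δ dist T _ T))

/-- Playing `σ` first and then `ε`-optimally guarantees `valStratGF σ - ε` against `μ_val`. -/
lemma valStratGF_lift_value_le_value (σ : FDist A) {q : Q} (hq : q ≠ T) :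
    valStratGF (fun a b => lift dist (value δ dist T) (δ q a b)) σ ≤ value δ dist T q := by
  refine le_of_forall_pos_le_add fun ε hε => ?_
  choose s hs using fun q' =>
    exists_lt_of_lt_ciSup (sub_lt_self (value δ dist T q') hε)
  have hpay : ∀ a b, lift dist (value δ dist T) (δ q a b) ∈ Set.Icc (0:ℝ) 1 :=
    fun a b => lift_mem_Icc dist (value_mem_Icc δ dist T) _
  suffices ∀ sB, valStratGF (fun a b => lift dist (value δ dist T) (δ q a b)) σ - ε
      ≤ reach δ dist T (Strat.cons σ s) sB q by
    have hcons : _ ≤ valA δ dist T (Strat.cons σ s) q := le_ciInf this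
    linarith [valA_le_value δ dist T (Strat.cons σ s) q]
  intro sB
  rw [reach_cons δ dist T σ s sB hq]
  calc valStratGF (fun a b => lift dist (value δ dist T) (δ q a b)) σ - ε
      ≤ ∑ q', step δ dist σ (sB [] q) q q' * value δ dist T q' - ε := by
        rw [sum_step_mul]; linarith [valStratGF_le_out hpay σ (sB [] q)]
    _ = ∑ q', step δ dist σ (sB [] q) q q' * (value δ dist T q' - ε) := by
        simp only [mul_sub, Finset.sum_sub_distrib, ← Finset.sum_mul, step_sum_one, one_mul]
    _ ≤ ∑ q', step δ dist σ (sB [] q) q q' * reach δ dist T (s q') (residual sB [q]) q' :=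
        Finset.sum_le_sum fun q' _ => mul_le_mul_of_nonneg_left
          ((hs q').le.trans (valA_le_reach δ dist T _ _ q')) (step_nonneg δ dist _ _ q q')

lemma Δop_value_le (q : Q) : Δop δ dist T (value δ dist T) q ≤ value δ dist T q := by
  by_cases hq : q = T
  · simp [Δop, hq, value_target]
  · simp only [Δop, hq, if_false]
    exact ciSup_le fun σ => valStratGF_lift_value_le_value δ dist T σ hq

variable {δ dist T}

lemma Δop_mem_Icc {v : Q → ℝ} (hv : ∀ q, v q ∈ Set.Icc (0:ℝ) 1) (q : Q) :
    Δop δ dist T v q ∈ Set.Icc (0:ℝ) 1 := by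
  by_cases hq : q = T
  · simp [Δop, hq]
  · simp only [Δop, hq, if_false]
    exact valGF_mem_Icc fun a b => lift_mem_Icc dist hv _

lemma Δop_mono {v v' : Q → ℝ} (hv : ∀ q, v q ∈ Set.Icc (0:ℝ) 1)
    (hv' : ∀ q, v' q ∈ Set.Icc (0:ℝ) 1) (h : ∀ q, v q ≤ v' q) (q : Q) :
    Δop δ dist T v q ≤ Δop δ dist T v' q := by
  by_cases hq : q = T
  · simp [Δop, hq]
  · simp only [Δop, hq, if_false]
    exact valGF_mono (fun a b => lift_mem_Icc dist hv _) (fun a b => lift_mem_Icc dist hv' _)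
      fun a b => lift_mono dist h _

variable (δ dist T) in
def ΔopIcc : (Q → unitInterval) →o (Q → unitInterval) where
  toFun w q := ⟨Δop δ dist T (fun r => w r) q, Δop_mem_Icc (fun r => (w r).2) q⟩
  monotone' w w' h q := Δop_mono (fun r => (w r).2) (fun r => (w' r).2) (fun r => h r) q

/-- Knaster–Tarski, `val` being a pre-fixed point of `Δ`. -/
lemma le_value_of_isLfpDelta {m : Q → ℝ} (hm : IsLfpDelta δ dist T m) (q : Q) :
    m q ≤ value δ dist T q := by
  set F := ΔopIcc δ dist T
  have hfix : Δop δ dist T (fun r => (OrderHom.lfp F r : ℝ)) = fun r => (OrderHom.lfp F r : ℝ) :=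
    funext fun r => congrArg (fun w : Q → unitInterval => (w r : ℝ)) F.map_lfp
  have hle : OrderHom.lfp F ≤ fun r => ⟨value δ dist T r, value_mem_Icc δ dist T r⟩ :=
    OrderHom.lfp_le F fun r => Δop_value_le δ dist T r
  exact (hm.2.2 _ (fun r => (OrderHom.lfp F r).2) hfix q).trans (hle q)

end Value

lemma exists_closed_subset_reflTransGen {α : Type} [Finite α] (R : α → α → Prop) {M : Set α}
    (hM : M.Nonempty) (hclosed : ∀ x ∈ M, ∀ y, R x y → y ∈ M) :
    ∃ S ⊆ M, S.Nonempty ∧ (∀ x ∈ S, ∀ y, R x y → y ∈ S) ∧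
      ∀ x ∈ S, ∀ y ∈ S, Relation.ReflTransGen (fun a b => a ∈ S ∧ R a b) x y := by
  obtain ⟨S, hSM, hmin⟩ := exists_minimal_le_of_wellFoundedLT
    (fun S : Set α => S.Nonempty ∧ ∀ x ∈ S, ∀ y, R x y → y ∈ S) M ⟨hM, hclosed⟩
  obtain ⟨hSne, hSclosed⟩ := hmin.prop
  refine ⟨S, hSM, hSne, hSclosed, fun x hx => ?_⟩
  set Rx := {y | Relation.ReflTransGen (fun a b => a ∈ S ∧ R a b) x y}
  have hRxS : Rx ⊆ S := fun y hy => by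
    induction hy with
    | refl => exact hx
    | tail _ hab _ => exact hSclosed _ hab.1 _ hab.2
  have hRxclosed : ∀ y ∈ Rx, ∀ z, R y z → z ∈ Rx :=
    fun y hy z hyz => Relation.ReflTransGen.tail hy ⟨hRxS hy, hyz⟩
  exact hmin.le_of_le ⟨⟨x, Relation.ReflTransGen.refl⟩, hRxclosed⟩ hRxS

section Positional

variable [DecidableEq B] (δ : Q → A → B → D) (dist : D → FDist Q) (sA : Q → FDist A)

lemma exists_endComp_subset (bsel : Q → B) {M : Set Q} (hM : M.Nonempty)
    (hclosed : ∀ q ∈ M, ∀ q', stepB δ dist sA q (bsel q) q' ≠ 0 → q' ∈ M) :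
    ∃ H : EndComp δ dist sA, H.states ⊆ M ∧ H.states.Nonempty := by
  obtain ⟨S, hSM, hSne, hSclosed, hSconn⟩ := exists_closed_subset_reflTransGen
    (fun q q' => stepB δ dist sA q (bsel q) q' ≠ 0) hM hclosed
  refine ⟨⟨S, fun q => {bsel q}, fun q _ => Set.singleton_nonempty _, ?_, ?_⟩, hSM, hSne⟩
  · rintro q hq b rfl q' hq'
    exact hSclosed q hq q' hq'
  · exact fun q hq q' hq' => Relation.ReflTransGen.mono
      (fun a _ hab => ⟨hab.1, bsel a, rfl, hab.2⟩) _ _ (hSconn q hq q' hq')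

variable {δ dist sA}

lemma le_sum_stepB_mul_of_locallyDominates [Nonempty B] {v : Q → ℝ}
    (hv : ∀ q, v q ∈ Set.Icc (0:ℝ) 1) (hdom : LocallyDominates δ dist sA v) (q : Q) (b : B) :
    v q ≤ ∑ q', stepB δ dist sA q b q' * v q' :=
  (hdom q).trans <| (valStratGF_le_out (fun _ _ => lift_mem_Icc dist hv _) (sA q) (dirac b)).trans
    (sum_step_mul δ dist (sA q) (dirac b) q v).ge

variable (δ dist sA)

lemma exists_sum_stepB_mul_valA_le [Nonempty B] (T q : Q) :
    ∃ b, ∑ q', stepB δ dist sA q b q' * valA δ dist T (ofPos sA) q'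
      ≤ valA δ dist T (ofPos sA) q := by
  set u := valA δ dist T (ofPos sA)
  by_cases hq : q = T
  · subst hq
    exact ⟨Classical.arbitrary B, (sum_mul_mem_Icc (step_nonneg δ dist _ _ q)
      (step_sum_one δ dist _ _ q) (valA_mem_Icc δ dist q _)).2.trans (valA_target δ dist q _).ge⟩
  obtain ⟨b, hb⟩ := exists_out_dirac_le (fun a b => lift dist u (δ q a b)) (sA q)
  refine ⟨b, le_ciInf fun sB => ?_⟩
  rw [reach_eq_sum_step δ dist T _ sB hq]
  calc ∑ q', stepB δ dist sA q b q' * u q'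
      = out (fun a b => lift dist u (δ q a b)) (sA q) (dirac b) := sum_step_mul δ dist _ _ q u
    _ ≤ out (fun a b => lift dist u (δ q a b)) (sA q) (sB [] q) := hb _
    _ = ∑ q', step δ dist (sA q) (sB [] q) q q' * u q' := (sum_step_mul δ dist _ _ q u).symm
    _ ≤ _ := Finset.sum_le_sum fun q' _ => mul_le_mul_of_nonneg_left
        (valA_le_reach δ dist T _ _ q') (step_nonneg δ dist _ _ q q')

/-- Player B actions keeping `val(sA)` from increasing never leave the states where the defect
`v - val(sA)` is maximal, since local domination keeps `v` from decreasing. -/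
lemma exists_endComp_subset_of_isMaxOn_defect [Nonempty B] {v : Q → ℝ}
    (hv : ∀ q, v q ∈ Set.Icc (0:ℝ) 1) (hdom : LocallyDominates δ dist sA v) (T : Q) {c : ℝ}
    (hmax : ∀ q, v q - valA δ dist T (ofPos sA) q ≤ c) {q₀ : Q}
    (hq₀ : v q₀ - valA δ dist T (ofPos sA) q₀ = c) :
    ∃ H : EndComp δ dist sA,
      H.states ⊆ {q | v q - valA δ dist T (ofPos sA) q = c} ∧ H.states.Nonempty := by
  choose bsel hbsel using exists_sum_stepB_mul_valA_le δ dist sA T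
  refine exists_endComp_subset δ dist sA bsel ⟨q₀, hq₀⟩ fun q hq q' hq' => ?_
  refine eq_of_le_sum_mul_of_forall_le (p := stepB δ dist sA q (bsel q))
    (step_nonneg δ dist _ _ q) (step_sum_one δ dist _ _ q) hmax ?_ hq'
  have hqc : v q - valA δ dist T (ofPos sA) q = c := hq
  simp only [mul_sub, Finset.sum_sub_distrib]
  linarith [le_sum_stepB_mul_of_locallyDominates hv hdom q (bsel q), hbsel q]

end Positional

end CRG

theorem stmt3_general
    {A B Q D : Type} [Fintype A] [Fintype B] [Fintype Q]
    [Nonempty A] [Nonempty B] [DecidableEq B]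
    (δ : Q → A → B → D) (dist : D → FDist Q) (T : Q)
    (m : Q → ℝ) (hm : CRG.IsLfpDelta δ dist T m)
    (v : Q → ℝ) (hv : ∀ q, v q ∈ Set.Icc (0:ℝ) 1) (hvm : ∀ q, v q ≤ m q)
    (sA : Q → FDist A) (hdom : CRG.LocallyDominates δ dist sA v)
    (hEC : ∀ H : CRG.EndComp δ dist sA, H.states ≠ {T} →
      ∀ q ∈ H.states, CRG.value δ dist T q = 0) :
    ∀ q : Q, v q ≤ CRG.valA δ dist T (CRG.ofPos sA) q := by
  open CRG in
  by_contra! ⟨q₁, hq₁⟩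
  set u := valA δ dist T (ofPos sA)
  obtain ⟨q₀, -, hq₀⟩ := Finset.exists_max_image Finset.univ (fun q => v q - u q) ⟨q₁, by simp⟩
  obtain ⟨H, hHM, y, hy⟩ := exists_endComp_subset_of_isMaxOn_defect δ dist sA hv hdom T
    (fun q => hq₀ q (Finset.mem_univ q)) rfl
  have hc : 0 < v q₀ - u q₀ := by linarith [hq₀ q₁ (Finset.mem_univ _)]
  have hyc : v y - u y = v q₀ - u q₀ := hHM hy
  have hyT : y ≠ T := by
    rintro rfl
    linarith [valA_target δ dist y (ofPos sA), (hv y).2]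
  have hvaly := hEC H (fun h => hyT (by simpa [h] using hy)) y hy
  linarith [hvm y, le_value_of_isLfpDelta hm y, (valA_mem_Icc δ dist T (ofPos sA) y).1]

/-- a positional Player A strategy locally dominating `v ⪯ m` whose end
components (other than the target) only contain states of value 0 guarantees `v`. -/
theorem stmt3
    {A B Q D : Type} [Fintype A] [Fintype B] [Fintype Q] [Fintype D]
    [Nonempty A] [Nonempty B] [Nonempty Q] [Nonempty D] [DecidableEq Q] [DecidableEq B]
    (δ : Q → A → B → D) (dist : D → FDist Q) (T : Q)
    (habs : CRG.Absorbing δ dist T)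
    (m : Q → ℝ) (hm : CRG.IsLfpDelta δ dist T m)
    (v : Q → ℝ) (hv : ∀ q, v q ∈ Set.Icc (0:ℝ) 1) (hvm : ∀ q, v q ≤ m q)
    (sA : Q → FDist A) (hdom : CRG.LocallyDominates δ dist sA v)
    (hEC : ∀ H : CRG.EndComp δ dist sA, H.states ≠ {T} →
      ∀ q ∈ H.states, CRG.value δ dist T q = 0) :
    ∀ q : Q, v q ≤ CRG.valA δ dist T (CRG.ofPos sA) q :=
  stmt3_general δ dist T m hm v hv hvm sA hdom hEC
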